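/- arXiv:math/0107181 — 2 statements merged into one kernel-verified Lean document; each statement's English description precedes it below -/
import Mathlib

section
/- The Zariski closure Z̄ of the solvable locus Z is an irreducible algebraic subset of the coefficient space; equivalently, the vanishing ideal I(Z) is a prime ideal of K[c_{i,a}]. -/
open Pointwise

/-- The index type of the coefficient variables: one coordinate `c_{i,a}`
for each `0 ≤ i ≤ n` and each `a ∈ 𝒜 i`. -/
abbrev CoeffIdx (n : ℕ) (𝒜 : Fin (n + 1) → Finset (Fin n → ℤ)) :=
  Σ i : Fin (n + 1), {a : Fin n → ℤ // a ∈ 𝒜 i}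

/-- The solvable locus `Z`: the set of coefficient vectors `c` such that the
Laurent polynomials `f_i^c = Σ_{a ∈ 𝒜 i} c_{i,a} x^a` have a common zero in
the torus `(K*)^n`. -/
def solvableLocus (n : ℕ) (𝒜 : Fin (n + 1) → Finset (Fin n → ℤ))
    (K : Type*) [Field K] : Set (CoeffIdx n 𝒜 → K) :=
  {c | ∃ x : Fin n → Kˣ, ∀ i : Fin (n + 1),
    ∑ a ∈ (𝒜 i).attach, c ⟨i, a⟩ * ((∏ j, x j ^ (a.1 j) : Kˣ) : K) = 0}

section
variable (n : ℕ) (𝒜 : Fin (n + 1) → Finset (Fin n → ℤ)) (K : Type*) [Field K]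

noncomputable abbrev Pring := MvPolynomial (CoeffIdx n 𝒜 ⊕ Fin n) K

noncomputable def tP : Pring n 𝒜 K := ∏ j, MvPolynomial.X (Sum.inr j)

lemma tP_ne_zero : tP n 𝒜 K ≠ 0 := by
  rw [tP]
  exact Finset.prod_ne_zero_iff.mpr fun j _ => MvPolynomial.X_ne_zero _

noncomputable abbrev Rring := Localization.Away (tP n 𝒜 K)

noncomputable def uX (j : Fin n) : (Rring n 𝒜 K)ˣ :=
  (IsLocalization.Away.isUnit_of_dvd (x := tP n 𝒜 K) (S := Rring n 𝒜 K)
    (Finset.dvd_prod_of_mem _ (Finset.mem_univ j))).unit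

lemma uX_val (j : Fin n) :
    ((uX n 𝒜 K j : (Rring n 𝒜 K)ˣ) : Rring n 𝒜 K)
      = algebraMap (Pring n 𝒜 K) (Rring n 𝒜 K) (MvPolynomial.X (Sum.inr j)) :=
  IsUnit.unit_spec _

noncomputable def monR (a : Fin n → ℤ) : (Rring n 𝒜 K)ˣ := ∏ j, uX n 𝒜 K j ^ (a j)

noncomputable def evR (x : Fin n → Kˣ) (c : CoeffIdx n 𝒜 → K) : Rring n 𝒜 K →+* K :=
  IsLocalization.Away.lift (g := MvPolynomial.eval (Sum.elim c (fun j => (x j : K)))) (tP n 𝒜 K)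
    (by
      rw [tP, map_prod]
      simp only [MvPolynomial.eval_X, Sum.elim_inr]
      have h1 : ((∏ j, x j : Kˣ) : K) = ∏ j, ((x j : Kˣ) : K) := map_prod (Units.coeHom K) _ _
      rw [← h1]
      exact (∏ j, x j).isUnit)

lemma evR_algebraMap (x : Fin n → Kˣ) (c : CoeffIdx n 𝒜 → K) (p : Pring n 𝒜 K) :
    evR n 𝒜 K x c (algebraMap _ _ p) = MvPolynomial.eval (Sum.elim c (fun j => (x j : K))) p :=
  IsLocalization.Away.lift_eq _ _ _

lemma evR_monR (x : Fin n → Kˣ) (c : CoeffIdx n 𝒜 → K) (a : Fin n → ℤ) :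
    evR n 𝒜 K x c ((monR n 𝒜 K a : (Rring n 𝒜 K)ˣ) : Rring n 𝒜 K)
      = ((∏ j, x j ^ (a j) : Kˣ) : K) := by
  have hu : ∀ j, (Units.map (evR n 𝒜 K x c).toMonoidHom) (uX n 𝒜 K j) = x j := by
    intro j
    ext
    rw [Units.coe_map]
    show evR n 𝒜 K x c _ = _
    rw [uX_val, evR_algebraMap]
    simp
  have h2 : (Units.map (evR n 𝒜 K x c).toMonoidHom) (monR n 𝒜 K a) = ∏ j, x j ^ (a j) := by
    rw [monR, map_prod]
    simp_rw [map_zpow, hu]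
  calc evR n 𝒜 K x c ((monR n 𝒜 K a : (Rring n 𝒜 K)ˣ) : Rring n 𝒜 K)
      = ((Units.map (evR n 𝒜 K x c).toMonoidHom) (monR n 𝒜 K a) : K) := (Units.coe_map _ _).symm
    _ = _ := by rw [h2]

lemma monK_neg_mul (x : Fin n → Kˣ) (a : Fin n → ℤ) :
    ((∏ j, x j ^ (-a j) : Kˣ) : K) * ((∏ j, x j ^ (a j) : Kˣ) : K) = 1 := by
  have h : (∏ j, x j ^ (-a j)) * (∏ j, x j ^ (a j)) = (1 : Kˣ) := by
    rw [← Finset.prod_mul_distrib]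
    simp [← zpow_add]
  rw [← Units.val_mul, h, Units.val_one]

lemma evR_jointly_injective [Infinite K] (r : Rring n 𝒜 K)
    (h : ∀ (x : Fin n → Kˣ) (c : CoeffIdx n 𝒜 → K), evR n 𝒜 K x c r = 0) : r = 0 := by
  obtain ⟨⟨p, s⟩, hp⟩ := IsLocalization.surj (M := Submonoid.powers (tP n 𝒜 K)) r
  have hps : ∀ (y : (CoeffIdx n 𝒜 ⊕ Fin n) → K), (∀ j, y (Sum.inr j) ≠ 0) →
      MvPolynomial.eval y p = 0 := by
    intro y hy
    have hsum : Sum.elim (fun v => y (Sum.inl v))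
        (fun j => ((Units.mk0 _ (hy j) : Kˣ) : K)) = y := by
      funext s; cases s <;> rfl
    have h2 := congrArg (evR n 𝒜 K (fun j => Units.mk0 _ (hy j)) (fun v => y (Sum.inl v))) hp
    rw [map_mul, h _ _, zero_mul, evR_algebraMap, hsum] at h2
    exact h2.symm
  have hpt : p * tP n 𝒜 K = 0 := by
    apply MvPolynomial.funext
    intro y
    rw [map_mul, map_zero]
    by_cases hy : ∀ j, y (Sum.inr j) ≠ 0
    · rw [hps y hy, zero_mul]
    · push_neg at hy
      obtain ⟨j, hj⟩ := hy
      have ht : MvPolynomial.eval y (tP n 𝒜 K) = 0 := by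
        rw [tP, map_prod]
        exact Finset.prod_eq_zero (Finset.mem_univ j)
          (by rw [MvPolynomial.eval_X]; exact hj)
      rw [ht, mul_zero]
  have hp0 : p = 0 := by
    rcases mul_eq_zero.mp hpt with h' | h'
    · exact h'
    · exact absurd h' (tP_ne_zero n 𝒜 K)
  rw [hp0, map_zero] at hp
  exact (IsUnit.mul_left_eq_zero (IsLocalization.map_units (Rring n 𝒜 K) s)).mp hp

variable (h𝒜 : ∀ i, (𝒜 i).Nonempty)

noncomputable def chosen (i : Fin (n + 1)) : {a : Fin n → ℤ // a ∈ 𝒜 i} :=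
  ⟨(h𝒜 i).choose, (h𝒜 i).choose_spec⟩

open Classical in
noncomputable def gen (v : CoeffIdx n 𝒜) : Rring n 𝒜 K :=
  if v.2 = chosen n 𝒜 h𝒜 v.1 then
    -((monR n 𝒜 K (-(chosen n 𝒜 h𝒜 v.1).1) : (Rring n 𝒜 K)ˣ) : Rring n 𝒜 K) *
      ∑ b ∈ (𝒜 v.1).attach.filter (fun b => ¬ b = chosen n 𝒜 h𝒜 v.1),
        algebraMap (Pring n 𝒜 K) _ (MvPolynomial.X (Sum.inl ⟨v.1, b⟩)) *
          ((monR n 𝒜 K b.1 : (Rring n 𝒜 K)ˣ) : Rring n 𝒜 K)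
  else algebraMap (Pring n 𝒜 K) _ (MvPolynomial.X (Sum.inl v))

noncomputable def phi : MvPolynomial (CoeffIdx n 𝒜) K →+* Rring n 𝒜 K :=
  MvPolynomial.eval₂Hom ((algebraMap (Pring n 𝒜 K) (Rring n 𝒜 K)).comp MvPolynomial.C)
    (gen n 𝒜 K h𝒜)

lemma evR_phi (x : Fin n → Kˣ) (c : CoeffIdx n 𝒜 → K) (f : MvPolynomial (CoeffIdx n 𝒜) K) :
    evR n 𝒜 K x c (phi n 𝒜 K h𝒜 f)
      = MvPolynomial.eval (fun v => evR n 𝒜 K x c (gen n 𝒜 K h𝒜 v)) f := by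
  have h2 : (evR n 𝒜 K x c).comp (phi n 𝒜 K h𝒜)
      = MvPolynomial.eval (fun v => evR n 𝒜 K x c (gen n 𝒜 K h𝒜 v)) := by
    apply MvPolynomial.ringHom_ext
    · intro k
      simp [phi, evR_algebraMap]
    · intro v
      simp [phi]
  exact DFunLike.congr_fun h2 f

open Classical in
lemma evR_gen_ne (x : Fin n → Kˣ) (c : CoeffIdx n 𝒜 → K) (v : CoeffIdx n 𝒜)
    (hv : ¬ v.2 = chosen n 𝒜 h𝒜 v.1) :
    evR n 𝒜 K x c (gen n 𝒜 K h𝒜 v) = c v := by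
  rw [gen, if_neg hv, evR_algebraMap]
  simp

open Classical in
lemma evR_gen_eq (x : Fin n → Kˣ) (c : CoeffIdx n 𝒜 → K) (i : Fin (n + 1)) :
    evR n 𝒜 K x c (gen n 𝒜 K h𝒜 ⟨i, chosen n 𝒜 h𝒜 i⟩)
      = -((∏ j, x j ^ (-(chosen n 𝒜 h𝒜 i).1 j) : Kˣ) : K) *
          ∑ b ∈ (𝒜 i).attach.filter (fun b => ¬ b = chosen n 𝒜 h𝒜 i),
            c ⟨i, b⟩ * ((∏ j, x j ^ (b.1 j) : Kˣ) : K) := by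
  rw [gen, if_pos rfl]
  simp only [map_mul, map_neg, map_sum, evR_monR, evR_algebraMap, MvPolynomial.eval_X,
    Sum.elim_inl, Pi.neg_apply]

open Classical in
lemma sum_split (i : Fin (n + 1)) (F : {a : Fin n → ℤ // a ∈ 𝒜 i} → K) :
    ∑ a ∈ (𝒜 i).attach, F a
      = F (chosen n 𝒜 h𝒜 i)
        + ∑ b ∈ (𝒜 i).attach.filter (fun b => ¬ b = chosen n 𝒜 h𝒜 i), F b := by
  rw [← Finset.sum_filter_add_sum_filter_not ((𝒜 i).attach) (fun b => b = chosen n 𝒜 h𝒜 i) F]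
  congr 1
  rw [Finset.filter_eq', if_pos (Finset.mem_attach _ _), Finset.sum_singleton]

open Classical in
lemma solves (x : Fin n → Kˣ) (c : CoeffIdx n 𝒜 → K) (i : Fin (n + 1)) :
    ∑ a ∈ (𝒜 i).attach,
      (evR n 𝒜 K x c (gen n 𝒜 K h𝒜 ⟨i, a⟩)) * ((∏ j, x j ^ (a.1 j) : Kˣ) : K) = 0 := by
  rw [sum_split n 𝒜 K h𝒜 i]
  have hcong : ∑ b ∈ (𝒜 i).attach.filter (fun b => ¬ b = chosen n 𝒜 h𝒜 i),
        evR n 𝒜 K x c (gen n 𝒜 K h𝒜 ⟨i, b⟩) * ((∏ j, x j ^ (b.1 j) : Kˣ) : K)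
      = ∑ b ∈ (𝒜 i).attach.filter (fun b => ¬ b = chosen n 𝒜 h𝒜 i),
        c ⟨i, b⟩ * ((∏ j, x j ^ (b.1 j) : Kˣ) : K) :=
    Finset.sum_congr rfl fun b hb => by
      rw [evR_gen_ne n 𝒜 K h𝒜 x c ⟨i, b⟩ (Finset.mem_filter.mp hb).2]
  rw [hcong, evR_gen_eq]
  linear_combination (-(∑ b ∈ (𝒜 i).attach.filter (fun b => ¬ b = chosen n 𝒜 h𝒜 i),
      c ⟨i, b⟩ * ((∏ j, x j ^ (b.1 j) : Kˣ) : K)))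
    * monK_neg_mul n K x ((chosen n 𝒜 h𝒜 i).1)

open Classical in
lemma gen_eval_eq_self (x : Fin n → Kˣ) (c : CoeffIdx n 𝒜 → K)
    (hx : ∀ i : Fin (n + 1),
      ∑ a ∈ (𝒜 i).attach, c ⟨i, a⟩ * ((∏ j, x j ^ (a.1 j) : Kˣ) : K) = 0)
    (v : CoeffIdx n 𝒜) :
    evR n 𝒜 K x c (gen n 𝒜 K h𝒜 v) = c v := by
  obtain ⟨i, s⟩ := v
  by_cases hs : s = chosen n 𝒜 h𝒜 i
  · subst hs
    have hx' := hx i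
    rw [sum_split n 𝒜 K h𝒜 i] at hx'
    have hS := eq_neg_of_add_eq_zero_right hx'
    rw [evR_gen_eq, hS]
    linear_combination (c ⟨i, chosen n 𝒜 h𝒜 i⟩) * monK_neg_mul n K x ((chosen n 𝒜 h𝒜 i).1)
  · exact evR_gen_ne n 𝒜 K h𝒜 x c ⟨i, s⟩ hs

end


/-- The vanishing ideal `I(Z)` of the solvable locus is a prime ideal of
`K[c_{i,a}]`; equivalently, the Zariski closure `Z̄` of `Z` is irreducible. -/
theorem vanishingIdeal_solvableLocus_isPrime
    (n : ℕ) (hn : 1 ≤ n) (𝒜 : Fin (n + 1) → Finset (Fin n → ℤ))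
    (h𝒜 : ∀ i, (𝒜 i).Nonempty)
    (K : Type*) [Field K] [IsAlgClosed K] :
    (MvPolynomial.vanishingIdeal K (solvableLocus n 𝒜 K)).IsPrime := by
  classical
  haveI : IsDomain (Rring n 𝒜 K) :=
    IsLocalization.isDomain_localization
      (powers_le_nonZeroDivisors_of_noZeroDivisors (tP_ne_zero n 𝒜 K))
  have hkey : MvPolynomial.vanishingIdeal K (solvableLocus n 𝒜 K)
      = RingHom.ker (phi n 𝒜 K h𝒜) := by
    ext f
    rw [MvPolynomial.mem_vanishingIdeal_iff, RingHom.mem_ker]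
    constructor
    · intro hf
      apply evR_jointly_injective
      intro x c
      rw [evR_phi]
      exact hf _ ⟨x, fun i => solves n 𝒜 K h𝒜 x c i⟩
    · intro hf c hc
      obtain ⟨x, hx⟩ := hc
      have h1 : (fun v => evR n 𝒜 K x c (gen n 𝒜 K h𝒜 v)) = c :=
        funext fun v => gen_eval_eq_self n 𝒜 K h𝒜 x c hx v
      have h2 := evR_phi n 𝒜 K h𝒜 x c f
      rw [h1] at h2
      change MvPolynomial.eval c f = 0
      rw [← h2, hf, map_zero]
  rw [hkey]
  exact RingHom.ker_isPrime _
end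

section
/- For every x ∈ conv(A₀) + K one has 0 ≤ h(x) ≤ 1, the supremum defining h(x) is attained, and h(x) = 1 if and only if x ∈ b₀ + K (the translate of K by b₀). -/
open Pointwise

/-- The lifted polytope `L = conv((A₀×{0}) ∪ {(b₀,1)}) + K×{0}` in `ℝⁿ×ℝ`. -/
def liftedPolytope (n : ℕ) (A₀ : Finset (Fin n → ℝ)) (b₀ : Fin n → ℝ)
    (K : Set (Fin n → ℝ)) : Set ((Fin n → ℝ) × ℝ) :=
  convexHull ℝ (((A₀ : Set (Fin n → ℝ)) ×ˢ ({0} : Set ℝ)) ∪ {(b₀, 1)})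
    + K ×ˢ ({0} : Set ℝ)

/-- The height function `h(x) = sup{t : (x,t) ∈ L}`. -/
noncomputable def heightFn (n : ℕ) (A₀ : Finset (Fin n → ℝ)) (b₀ : Fin n → ℝ)
    (K : Set (Fin n → ℝ)) (x : Fin n → ℝ) : ℝ :=
  sSup {t : ℝ | (x, t) ∈ liftedPolytope n A₀ b₀ K}

/-! The height coordinate takes values in `[0, 1]` on `L`, and the value `1` only over
`b₀ + K`, because `(b₀, 1)` is the only generator of `L` off the hyperplane `t = 0`.
The fibres of `L` over `conv(A₀) + K` contain `0`, and they are compact because `L` is,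
so the supremum `h(x)` is a maximum. -/

section ConeOverBase

variable {𝕜 E : Type*} [Field 𝕜] [LinearOrder 𝕜] [IsStrictOrderedRing 𝕜]
  [AddCommGroup E] [Module 𝕜 E] {s : Set E} {b : E} {p : E × 𝕜}

theorem prod_zero_subset_convexHull_prod_zero_union (s : Set E) (b : E) :
    convexHull 𝕜 s ×ˢ ({0} : Set 𝕜) ⊆ convexHull 𝕜 (s ×ˢ {0} ∪ {(b, 1)}) := by
  have hprod := convexHull_prod (R := 𝕜) s ({0} : Set 𝕜)
  rw [convexHull_singleton] at hprod
  exact hprod ▸ convexHull_mono Set.subset_union_left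

theorem snd_mem_Icc_of_mem_convexHull_prod_zero_union
    (hp : p ∈ convexHull 𝕜 (s ×ˢ {0} ∪ {(b, 1)})) : p.2 ∈ Set.Icc 0 1 := by
  refine convexHull_min ?_ ((convex_Icc 0 1).linear_preimage (LinearMap.snd 𝕜 E 𝕜)) hp
  rintro q (⟨-, hq⟩ | rfl)
  · simp [Set.mem_singleton_iff.mp hq]
  · simp

theorem eq_of_mem_convexHull_prod_zero_union_of_snd_eq_one
    (hp : p ∈ convexHull 𝕜 (s ×ˢ {0} ∪ {(b, 1)})) (hp₂ : p.2 = 1) : p = (b, 1) := by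
  rcases s.eq_empty_or_nonempty with rfl | hs
  · simpa using hp
  rw [Set.union_singleton, convexHull_insert (hs.prod (Set.singleton_nonempty 0)),
    convexHull_prod, convexHull_singleton, convexJoin_singleton_left] at hp
  obtain ⟨r, ⟨-, hr₂⟩, α, β, -, -, hαβ, rfl⟩ := Set.mem_iUnion₂.mp hp
  simp only [Set.mem_singleton_iff] at hr₂
  simp only [Prod.snd_add, Prod.smul_snd, hr₂, smul_eq_mul, mul_one, mul_zero,
    add_zero] at hp₂
  obtain rfl : β = 0 := by linarith
  simp [hp₂]

end ConeOverBase

section LiftedPolytope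

variable {n : ℕ} {A₀ : Finset (Fin n → ℝ)} {b₀ : Fin n → ℝ} {K : Set (Fin n → ℝ)}
  {x : Fin n → ℝ} {t : ℝ}

theorem mem_liftedPolytope_iff :
    (x, t) ∈ liftedPolytope n A₀ b₀ K ↔
      ∃ y : Fin n → ℝ, (y, t) ∈ convexHull ℝ ((A₀ : Set (Fin n → ℝ)) ×ˢ {0} ∪ {(b₀, 1)}) ∧
        ∃ k ∈ K, y + k = x := by
  constructor
  · rintro ⟨p, hp, q, ⟨hq, hq₂⟩, hpq⟩
    simp only [Set.mem_singleton_iff] at hq₂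
    simp only [Prod.ext_iff, Prod.fst_add, Prod.snd_add, hq₂, add_zero] at hpq
    exact ⟨p.1, hpq.2 ▸ hp, q.1, hq, hpq.1⟩
  · rintro ⟨y, hy, k, hk, rfl⟩
    exact ⟨(y, t), hy, (k, 0), ⟨hk, rfl⟩, by simp⟩

theorem mem_Icc_of_mem_liftedPolytope (h : (x, t) ∈ liftedPolytope n A₀ b₀ K) :
    t ∈ Set.Icc 0 1 := by
  obtain ⟨y, hy, -⟩ := mem_liftedPolytope_iff.mp h
  exact snd_mem_Icc_of_mem_convexHull_prod_zero_union hy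

theorem mem_liftedPolytope_zero (hx : x ∈ convexHull ℝ (A₀ : Set (Fin n → ℝ)) + K) :
    (x, 0) ∈ liftedPolytope n A₀ b₀ K := by
  obtain ⟨y, hy, k, hk, rfl⟩ := hx
  exact mem_liftedPolytope_iff.mpr
    ⟨y, prod_zero_subset_convexHull_prod_zero_union _ _ ⟨hy, rfl⟩, k, hk, rfl⟩

theorem mem_liftedPolytope_one_iff :
    (x, 1) ∈ liftedPolytope n A₀ b₀ K ↔ x ∈ ({b₀} : Set (Fin n → ℝ)) + K := by
  rw [mem_liftedPolytope_iff, Set.singleton_add, Set.mem_image]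
  constructor
  · rintro ⟨y, hy, k, hk, rfl⟩
    obtain rfl : y = b₀ :=
      congrArg Prod.fst (eq_of_mem_convexHull_prod_zero_union_of_snd_eq_one hy rfl)
    exact ⟨k, hk, rfl⟩
  · rintro ⟨k, hk, rfl⟩
    exact ⟨b₀, subset_convexHull ℝ _ (Or.inr rfl), k, hk, rfl⟩

theorem isCompact_liftedPolytope (hK : IsCompact K) :
    IsCompact (liftedPolytope n A₀ b₀ K) :=
  ((A₀.finite_toSet.prod (Set.finite_singleton 0)).union
    (Set.finite_singleton _)).isCompact_convexHull (𝕜 := ℝ) |>.add (hK.prod isCompact_singleton)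

theorem isCompact_setOf_mem_liftedPolytope (hK : IsCompact K) (x : Fin n → ℝ) :
    IsCompact {t : ℝ | (x, t) ∈ liftedPolytope n A₀ b₀ K} :=
  isCompact_Icc.of_isClosed_subset
    ((isCompact_liftedPolytope hK).isClosed.preimage (Continuous.prodMk_right x))
    fun _ => mem_Icc_of_mem_liftedPolytope

end LiftedPolytope

theorem heightFn_bounds_attained_eq_one_iff_general
    (n : ℕ) (A₀ : Finset (Fin n → ℝ)) (b₀ : Fin n → ℝ)
    (K : Set (Fin n → ℝ)) (hKcp : IsCompact K) :
    ∀ x ∈ convexHull ℝ (A₀ : Set (Fin n → ℝ)) + K,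
      0 ≤ heightFn n A₀ b₀ K x ∧ heightFn n A₀ b₀ K x ≤ 1 ∧
      (x, heightFn n A₀ b₀ K x) ∈ liftedPolytope n A₀ b₀ K ∧
      (heightFn n A₀ b₀ K x = 1 ↔ x ∈ ({b₀} : Set (Fin n → ℝ)) + K) := by
  intro x hx
  have hfibre := isCompact_setOf_mem_liftedPolytope (A₀ := A₀) (b₀ := b₀) hKcp x
  have hmax : (x, heightFn n A₀ b₀ K x) ∈ liftedPolytope n A₀ b₀ K :=
    hfibre.sSup_mem ⟨0, mem_liftedPolytope_zero hx⟩
  obtain ⟨hnonneg, hle⟩ := mem_Icc_of_mem_liftedPolytope hmax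
  refine ⟨hnonneg, hle, hmax, fun h => mem_liftedPolytope_one_iff.mp (h ▸ hmax), fun h => ?_⟩
  exact hle.antisymm (le_csSup hfibre.bddAbove (mem_liftedPolytope_one_iff.mpr h))

/-- For every `x ∈ conv(A₀) + K` one has `0 ≤ h(x) ≤ 1`, the supremum
defining `h(x)` is attained, and `h(x) = 1` iff `x` lies in the translate
`b₀ + K`. -/
theorem heightFn_bounds_attained_eq_one_iff
    (n : ℕ) (A₀ : Finset (Fin n → ℝ)) (b₀ : Fin n → ℝ) (hb₀ : b₀ ∈ A₀)
    (K : Set (Fin n → ℝ)) (hKne : K.Nonempty) (hKcp : IsCompact K)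
    (hKcv : Convex ℝ K) :
    ∀ x ∈ convexHull ℝ (A₀ : Set (Fin n → ℝ)) + K,
      0 ≤ heightFn n A₀ b₀ K x ∧ heightFn n A₀ b₀ K x ≤ 1 ∧
      (x, heightFn n A₀ b₀ K x) ∈ liftedPolytope n A₀ b₀ K ∧
      (heightFn n A₀ b₀ K x = 1 ↔ x ∈ ({b₀} : Set (Fin n → ℝ)) + K) :=
  heightFn_bounds_attained_eq_one_iff_general n A₀ b₀ K hKcp
end
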